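/- Define δ(α) = r − μ̃ − α√(1−ρ²)σ with σ > 0, ρ ∈ (−1,1), and let C^α(S) = S e^{−δ(α)τ}Φ(d₁(α)) − K e^{−rτ}Φ(d₂(α)) be the dividend-yield Black-Scholes call price with d₁(α) = (ln(S/K) + (r − δ(α) + σ²/2)τ)/(σ√τ), d₂(α) = d₁(α) − σ√τ, τ > 0, K > 0. Then α ↦ C^α(S) is non-decreasing on [0,∞) for every fixed S > 0; in particular the seller's call price (α ≥ 0) is at least the α = 0 (minimal-martingale-measure) price, which in turn is at least the buyer's call price (α replaced by −β, β ≥ 0). -/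

import Mathlib

noncomputable def stdNormalCDF (x : ℝ) : ℝ :=
  ∫ t in Set.Iic x, Real.exp (-t^2/2) / Real.sqrt (2*Real.pi)

/-- The dividend-yield Black–Scholes call price with `δ(α) = r - μ̃ - α√(1-ρ²)σ`. -/
noncomputable def callPrice (S K σ r τ ρ μt α : ℝ) : ℝ :=
  S * Real.exp (-(r - μt - α * Real.sqrt (1 - ρ^2) * σ)*τ) *
    stdNormalCDF ((Real.log (S/K)
      + (r - (r - μt - α * Real.sqrt (1 - ρ^2) * σ) + σ^2/2)*τ)/(σ*Real.sqrt τ))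
  - K * Real.exp (-r*τ) *
    stdNormalCDF ((Real.log (S/K)
      + (r - (r - μt - α * Real.sqrt (1 - ρ^2) * σ) + σ^2/2)*τ)/(σ*Real.sqrt τ)
      - σ*Real.sqrt τ)

/-!
Viewed as a function of the dividend yield `q`, the Black–Scholes call price has derivative
`-τ S e^{-qτ} Φ(d₁)`: the two density terms cancel by the identity
`S e^{-qτ} φ(d₁) = K e^{-rτ} φ(d₂)`. So the price is antitone in `q`, and
`δ(α) = r - μ̃ - α√(1-ρ²)σ` is antitone in `α`.
-/

open Real MeasureTheory

lemma integrable_stdNormalPDF : Integrable fun t : ℝ => exp (-t^2/2) / √(2*π) := by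
  convert (integrable_exp_neg_mul_sq (b := 1/2) (by norm_num)).div_const (√(2*π)) using 4
  ring

lemma stdNormalCDF_nonneg (x : ℝ) : 0 ≤ stdNormalCDF x :=
  setIntegral_nonneg measurableSet_Iic fun _ _ => by positivity

lemma hasDerivAt_stdNormalCDF (x : ℝ) :
    HasDerivAt stdNormalCDF (exp (-x^2/2) / √(2*π)) x := by
  have hsplit : stdNormalCDF = fun y =>
      (∫ t in Set.Iic 0, exp (-t^2/2) / √(2*π)) + ∫ t in (0:ℝ)..y, exp (-t^2/2) / √(2*π) := by
    funext y
    rw [← intervalIntegral.integral_Iic_sub_Iic integrable_stdNormalPDF.integrableOn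
      integrable_stdNormalPDF.integrableOn, stdNormalCDF]
    ring
  rw [hsplit]
  exact ((Continuous.integral_hasStrictDerivAt (by fun_prop) 0 x).hasDerivAt).const_add _

section BlackScholes

variable {S K σ r τ : ℝ}

variable (S K σ r τ) in
noncomputable def bsD1 (q : ℝ) : ℝ := (log (S/K) + (r - q + σ^2/2)*τ) / (σ*√τ)

variable (S K σ r τ) in
noncomputable def bsCall (q : ℝ) : ℝ :=
  S * exp (-q*τ) * stdNormalCDF (bsD1 S K σ r τ q)
    - K * exp (-r*τ) * stdNormalCDF (bsD1 S K σ r τ q - σ*√τ)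

lemma hasDerivAt_bsD1 (hσ : 0 < σ) (hτ : 0 < τ) (q : ℝ) :
    HasDerivAt (bsD1 S K σ r τ) (-τ / (σ*√τ)) q := by
  have hs : σ*√τ ≠ 0 := (mul_pos hσ (sqrt_pos.mpr hτ)).ne'
  have hlin : bsD1 S K σ r τ =
      fun p => p * (-τ / (σ*√τ)) + (log (S/K) + (r + σ^2/2)*τ) / (σ*√τ) := by
    funext p; simp only [bsD1]; field_simp; ring
  rw [hlin]
  simpa using ((hasDerivAt_id' q).mul_const (-τ / (σ*√τ))).add_const
    ((log (S/K) + (r + σ^2/2)*τ) / (σ*√τ))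

lemma bs_density_identity (hS : 0 < S) (hK : 0 < K) (hσ : 0 < σ) (hτ : 0 < τ) (q : ℝ) :
    S * exp (-q*τ) * exp (-bsD1 S K σ r τ q ^ 2 / 2)
      = K * exp (-r*τ) * exp (-(bsD1 S K σ r τ q - σ*√τ) ^ 2 / 2) := by
  have hs : σ*√τ ≠ 0 := (mul_pos hσ (sqrt_pos.mpr hτ)).ne'
  have hd : bsD1 S K σ r τ q * (σ*√τ) = log S - log K + (r - q + σ^2/2)*τ := by
    rw [bsD1, div_mul_cancel₀ _ hs, log_div hS.ne' hK.ne']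
  have hs2 : (σ*√τ)^2 = σ^2*τ := by rw [mul_pow, sq_sqrt hτ.le]
  generalize bsD1 S K σ r τ q = d at hd ⊢
  rw [← exp_log hS, ← exp_log hK]
  simp only [← exp_add, exp_eq_exp]
  linear_combination -hd + hs2 / 2

lemma hasDerivAt_bsCall (hS : 0 < S) (hK : 0 < K) (hσ : 0 < σ) (hτ : 0 < τ) (q : ℝ) :
    HasDerivAt (bsCall S K σ r τ)
      (-τ * S * exp (-q*τ) * stdNormalCDF (bsD1 S K σ r τ q)) q := by
  have hd := hasDerivAt_bsD1 (S := S) (K := K) (r := r) hσ hτ q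
  have hexp : HasDerivAt (fun p => exp (-p*τ)) (exp (-q*τ) * -τ) q := by
    simpa using ((hasDerivAt_id q).neg.mul_const τ).exp
  have hΦ₁ := (hasDerivAt_stdNormalCDF _).comp q hd
  have hΦ₂ := (hasDerivAt_stdNormalCDF _).comp q (hd.sub_const (σ*√τ))
  refine (((hexp.const_mul S).mul hΦ₁).sub (hΦ₂.const_mul (K * exp (-r*τ)))).congr_deriv ?_
  simp only [Function.comp_apply]
  linear_combination (-τ / (σ*√τ) / √(2*π)) * bs_density_identity (r := r) hS hK hσ hτ q

lemma bsCall_antitone (hS : 0 < S) (hK : 0 < K) (hσ : 0 < σ) (hτ : 0 < τ) :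
    Antitone (bsCall S K σ r τ) :=
  antitone_of_deriv_nonpos (fun q => (hasDerivAt_bsCall hS hK hσ hτ q).differentiableAt)
    fun q => by
      rw [(hasDerivAt_bsCall hS hK hσ hτ q).deriv]
      have := mul_nonneg (by positivity : 0 ≤ τ * S * exp (-q*τ))
        (stdNormalCDF_nonneg (bsD1 S K σ r τ q))
      linarith

end BlackScholes

lemma callPrice_eq_bsCall (S K σ r τ ρ μt α : ℝ) :
    callPrice S K σ r τ ρ μt α = bsCall S K σ r τ (r - μt - α * √(1 - ρ^2) * σ) := rfl

theorem stmt16_general (σ r τ ρ μt K : ℝ) (hσ : 0 < σ) (hτ : 0 < τ) (hK : 0 < K) :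
    ∀ S : ℝ, 0 < S →
      MonotoneOn (fun α => callPrice S K σ r τ ρ μt α) (Set.Ici (0:ℝ))
      ∧ ∀ α β : ℝ, 0 ≤ α → 0 ≤ β →
        callPrice S K σ r τ ρ μt (-β) ≤ callPrice S K σ r τ ρ μt 0
        ∧ callPrice S K σ r τ ρ μt 0 ≤ callPrice S K σ r τ ρ μt α := by
  intro S hS
  have hδ : Antitone fun α : ℝ => r - μt - α * √(1 - ρ^2) * σ := fun a b hab => by
    dsimp only
    gcongr
  have hm : Monotone fun α => callPrice S K σ r τ ρ μt α := by
    simp only [callPrice_eq_bsCall]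
    exact (bsCall_antitone hS hK hσ hτ).comp hδ
  exact ⟨hm.monotoneOn _, fun α β hα hβ => ⟨hm (by linarith), hm hα⟩⟩

/-- The seller's call price is non-decreasing in the Sharpe ratio `α`; in particular
the buyer's price (with `α` replaced by `-β`) is at most the `α = 0` price, which is
at most the seller's price. -/
theorem stmt16 (σ r τ ρ μt K : ℝ) (hσ : 0 < σ) (hτ : 0 < τ) (hK : 0 < K)
    (hρ : ρ ∈ Set.Ioo (-1 : ℝ) 1) :
    ∀ S : ℝ, 0 < S →
      MonotoneOn (fun α => callPrice S K σ r τ ρ μt α) (Set.Ici (0:ℝ))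
      ∧ ∀ α β : ℝ, 0 ≤ α → 0 ≤ β →
        callPrice S K σ r τ ρ μt (-β) ≤ callPrice S K σ r τ ρ μt 0
        ∧ callPrice S K σ r τ ρ μt 0 ≤ callPrice S K σ r τ ρ μt α :=
  stmt16_general σ r τ ρ μt K hσ hτ hK
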